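/- arXiv:2302.10604 — 4 statements merged into one kernel-verified Lean document; each statement's English description precedes it below -/
import Mathlib

section
/- Let M ∈ ℂ^{2n×2n} be such that the pencil φ(z) = M + zMᵀ is regular. Let U₁, U₂, V₁, V₂, A', B' ∈ ℂ^{n×n} satisfy M·[U₁; U₂] = [V₁; V₂]·A' and Mᵀ·[U₁; U₂] = [V₁; V₂]·B', where the 2n×n block matrices [U₁; U₂] and [V₁; V₂] (vertical concatenations) both have rank n, and the pencil α(z) = A' + zB' is regular with reciprocal-free spectrum. Then U₁ is invertible if and only if V₂ is invertible. -/
open scoped Matrix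

/-- A pencil `A + z B` of square complex matrices is regular
if `det (A + z B)` is not identically zero. -/
def PencilRegular {ι : Type*} [Fintype ι] [DecidableEq ι] (A B : Matrix ι ι ℂ) : Prop :=
  ∃ z : ℂ, (A + z • B).det ≠ 0

/-- The spectrum of the pencil `A + z B` is reciprocal-free: no pair of eigenvalues
`(z, w)` with `z w = 1`, and `0` and `∞` are not both eigenvalues. -/
def PencilReciprocalFree {ι : Type*} [Fintype ι] [DecidableEq ι]
    (A B : Matrix ι ι ℂ) : Prop :=
  (¬ ∃ z w : ℂ, z * w = 1 ∧ (A + z • B).det = 0 ∧ (A + w • B).det = 0) ∧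
    ¬ (A.det = 0 ∧ B.det = 0)


/-!
Put `K = Uᵀ V`. The two intertwining relations give `Uᵀ M U = K A'` and `Uᵀ Mᵀ U = K B'`, hence
the T-Sylvester equation `K A' = B'ᵀ Kᵀ`. Reciprocal-freeness makes `S = A' + B'` invertible, and
with `D = A' - B'` the equation turns into the Sylvester equation `K (D S⁻¹) = -(S⁻¹ D)ᵀ K`. Its
two coefficient matrices have the eigenvalue `a` only if `det ((a - 1) A' + (a + 1) B') = 0`,
respectively `det ((a + 1) A' + (a - 1) B') = 0`, which reciprocal-freeness forbids
simultaneously; so their characteristic polynomials are coprime and `K = 0`. Then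
`U₁ᵀ V₁ + U₂ᵀ V₂ = 0`, and since `[U₁; U₂]` and `[V₁; V₂]` have trivial kernels, an invertible
`U₁` forces `ker V₂ = 0` and an invertible `V₂` forces `ker U₁ = 0`.
-/

open Matrix Polynomial

namespace Matrix

section Sylvester

variable {R : Type*} [CommRing R] {m n : Type*} [Fintype m] [Fintype n] [DecidableEq m]
  [DecidableEq n]

theorem mul_aeval_eq_aeval_mul {K : Matrix m n R} {Q : Matrix n n R} {N : Matrix m m R}
    (h : K * Q = N * K) (p : R[X]) : K * aeval Q p = aeval N p * K := by
  induction p using Polynomial.induction_on' with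
  | add p q hp hq => rw [map_add, map_add, Matrix.mul_add, Matrix.add_mul, hp, hq]
  | monomial k c =>
    have hpow : K * Q ^ k = N ^ k * K := by
      induction k with
      | zero => simp
      | succ k ih => rw [pow_succ, pow_succ, ← Matrix.mul_assoc, ih, Matrix.mul_assoc, h,
          Matrix.mul_assoc]
    simp only [aeval_monomial, Algebra.algebraMap_eq_smul_one, smul_mul_assoc, one_mul,
      Matrix.mul_smul, hpow, Matrix.smul_mul]

theorem eq_zero_of_mul_eq_mul_of_isCoprime_charpoly {K : Matrix m n R} {Q : Matrix n n R}
    {N : Matrix m m R} (h : K * Q = N * K) (hQN : IsCoprime Q.charpoly N.charpoly) :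
    K = 0 := by
  obtain ⟨a, b, hab⟩ := hQN
  have hinv : aeval N a * aeval N Q.charpoly = 1 := by
    simpa [aeval_self_charpoly] using congrArg (aeval N) hab
  calc K = aeval N a * (aeval N Q.charpoly * K) := by rw [← Matrix.mul_assoc, hinv, Matrix.one_mul]
    _ = 0 := by
      rw [← mul_aeval_eq_aeval_mul h, aeval_self_charpoly, Matrix.mul_zero, Matrix.mul_zero]

end Sylvester

section Deflating

variable {R : Type*} [CommSemiring R] {ι κ : Type*} [Fintype ι] [Fintype κ]

theorem transpose_mul_mul_eq_of_mul_eq_mul {M : Matrix ι ι R} {U V : Matrix ι κ R}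
    {A B : Matrix κ κ R} (hA : M * U = V * A) (hB : Mᵀ * U = V * B) :
    Uᵀ * V * A = Bᵀ * (Uᵀ * V)ᵀ := by
  calc Uᵀ * V * A = Uᵀ * (M * U) := by rw [hA, Matrix.mul_assoc]
    _ = (Mᵀ * U)ᵀ * U := by rw [transpose_mul, transpose_transpose, Matrix.mul_assoc]
    _ = Bᵀ * (Uᵀ * V)ᵀ := by
      rw [hB, transpose_mul, transpose_mul, transpose_transpose, Matrix.mul_assoc]

end Deflating

section FullColumnRank

variable {K : Type*} [Field K] {ι : Type*} [Fintype ι]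

theorem eq_zero_of_rank_fromRows_eq {m₁ m₂ : Type*} [Fintype m₁] [Fintype m₂]
    {A₁ : Matrix m₁ ι K} {A₂ : Matrix m₂ ι K} (h : (fromRows A₁ A₂).rank = Fintype.card ι)
    {v : ι → K} (h₁ : A₁ *ᵥ v = 0) (h₂ : A₂ *ᵥ v = 0) : v = 0 := by
  have hinj : Function.Injective (fromRows A₁ A₂).mulVec := mulVec_injective_iff.mpr <|
    linearIndependent_iff_card_eq_finrank_span.mpr <| by
      rw [Set.finrank, ← rank_eq_finrank_span_cols, h]
  exact hinj (by rw [fromRows_mulVec, h₁, h₂, Sum.elim_zero_zero, mulVec_zero])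

theorem isUnit_of_mul_add_mul_eq_zero [DecidableEq ι] {P W Y₁ Y₂ : Matrix ι ι K}
    (hP : IsUnit P) (h : P * Y₁ + W * Y₂ = 0) (hY : ∀ v, Y₁ *ᵥ v = 0 → Y₂ *ᵥ v = 0 → v = 0) :
    IsUnit Y₂ := by
  rw [isUnit_iff_isUnit_det, isUnit_iff_ne_zero]
  intro hdet
  obtain ⟨v, hv0, hv⟩ := exists_mulVec_eq_zero_iff.mpr hdet
  refine hv0 (hY v (mulVec_injective_iff_isUnit.mpr hP ?_) hv)
  simpa [add_mulVec, ← mulVec_mulVec, hv] using congrArg (· *ᵥ v) h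

end FullColumnRank

end Matrix

namespace PencilReciprocalFree

variable {ι : Type*} [Fintype ι] [DecidableEq ι] {A B : Matrix ι ι ℂ}

theorem det_add_ne_zero (hrf : PencilReciprocalFree A B) : (A + B).det ≠ 0 := fun h =>
  hrf.1 ⟨1, 1, mul_one 1, by simpa using h, by simpa using h⟩

theorem det_smul_add_smul_ne_zero_or (hrf : PencilReciprocalFree A B) {c d : ℂ}
    (hcd : c ≠ 0 ∨ d ≠ 0) : (c • A + d • B).det ≠ 0 ∨ (d • A + c • B).det ≠ 0 := by
  have normalize : ∀ {c : ℂ} (d : ℂ), c ≠ 0 →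
      (c • A + d • B).det = c ^ Fintype.card ι * (A + (d / c) • B).det := fun d hc => by
    rw [← det_smul, smul_add, smul_smul, mul_div_cancel₀ _ hc]
  by_contra! h
  obtain ⟨h₁, h₂⟩ := h
  rcases eq_or_ne c 0 with rfl | hc
  · have hd := hcd.resolve_left (not_not.mpr rfl)
    simp only [zero_smul, zero_add, add_zero, det_smul, mul_eq_zero, pow_eq_zero_iff',
      hd, false_and, false_or] at h₁ h₂
    exact hrf.2 ⟨h₂, h₁⟩
  rcases eq_or_ne d 0 with rfl | hd
  · simp only [zero_smul, zero_add, add_zero, det_smul, mul_eq_zero, pow_eq_zero_iff',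
      hc, false_and, false_or] at h₁ h₂
    exact hrf.2 ⟨h₁, h₂⟩
  rw [normalize d hc, mul_eq_zero] at h₁
  rw [normalize c hd, mul_eq_zero] at h₂
  exact hrf.1 ⟨d / c, c / d, by field_simp, h₁.resolve_left (pow_ne_zero _ hc),
    h₂.resolve_left (pow_ne_zero _ hd)⟩

theorem eq_zero_of_mul_eq_transpose_mul (hrf : PencilReciprocalFree A B) {K : Matrix ι ι ℂ}
    (h : K * A = Bᵀ * Kᵀ) : K = 0 := by
  set S := A + B
  set D := A - B
  have hS : IsUnit S.det := isUnit_iff_ne_zero.mpr hrf.det_add_ne_zero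
  have hKB : K * B = Aᵀ * Kᵀ := by simpa using (congrArg transpose h).symm
  have hKS : K * S = Sᵀ * Kᵀ := by
    rw [Matrix.mul_add, h, hKB, transpose_add, Matrix.add_mul, add_comm]
  have hKD : K * D = -(Dᵀ * Kᵀ) := by
    rw [Matrix.mul_sub, h, hKB, transpose_sub, Matrix.sub_mul, neg_sub]
  have hKT : Kᵀ * S⁻¹ = S⁻¹ᵀ * K := by
    have hST : IsUnit Sᵀ.det := by rwa [det_transpose]
    calc Kᵀ * S⁻¹ = Sᵀ⁻¹ * (Sᵀ * Kᵀ) * S⁻¹ := by rw [Matrix.nonsing_inv_mul_cancel_left _ _ hST]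
      _ = S⁻¹ᵀ * K := by
        rw [← hKS, ← Matrix.mul_assoc, Matrix.mul_nonsing_inv_cancel_right _ _ hS,
          transpose_nonsing_inv]
  refine eq_zero_of_mul_eq_mul_of_isCoprime_charpoly (Q := D * S⁻¹) (N := -(S⁻¹ * D)ᵀ) ?_ ?_
  · calc K * (D * S⁻¹) = -(Dᵀ * (Kᵀ * S⁻¹)) := by
          rw [← Matrix.mul_assoc, hKD, Matrix.neg_mul, Matrix.mul_assoc]
      _ = -(S⁻¹ * D)ᵀ * K := by rw [hKT, transpose_mul, Matrix.neg_mul, Matrix.mul_assoc]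
  · rw [isCoprime_iff_aeval_ne_zero_of_isAlgClosed ℂ ℂ]
    intro a
    simp only [coe_aeval_eq_eval, eval_charpoly]
    have hscalar : scalar ι a = a • (1 : Matrix ι ι ℂ) := by
      rw [scalar_apply, smul_one_eq_diagonal]
    have hQ : scalar ι a - D * S⁻¹ = ((a - 1) • A + (a + 1) • B) * S⁻¹ := by
      rw [hscalar, ← mul_nonsing_inv S hS, ← Matrix.smul_mul, ← Matrix.sub_mul]
      congr 1
      module
    have hN : scalar ι a - -(S⁻¹ * D)ᵀ = (S⁻¹ * ((a + 1) • A + (a - 1) • B))ᵀ := by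
      rw [hscalar, sub_neg_eq_add, ← transpose_one, ← transpose_smul, ← transpose_add,
        ← nonsing_inv_mul S hS, ← Matrix.mul_smul, ← Matrix.mul_add]
      congr 2
      module
    have hSinv : (S⁻¹).det ≠ 0 := (isUnit_nonsing_inv_det S hS).ne_zero
    have hcd : a - 1 ≠ 0 ∨ a + 1 ≠ 0 := by
      rcases eq_or_ne a 1 with rfl | ha
      · norm_num
      · exact .inl (sub_ne_zero.mpr ha)
    rw [hQ, hN, det_transpose, det_mul, det_mul]
    rcases hrf.det_smul_add_smul_ne_zero_or hcd with h | h
    · exact .inl (mul_ne_zero h hSinv)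
    · exact .inr (mul_ne_zero hSinv h)

end PencilReciprocalFree

theorem U1_invertible_iff_V2_invertible_general
    (n : ℕ) (M : Matrix (Fin n ⊕ Fin n) (Fin n ⊕ Fin n) ℂ)
    (U₁ U₂ V₁ V₂ A' B' : Matrix (Fin n) (Fin n) ℂ)
    (hUrank : (Matrix.fromRows U₁ U₂).rank = n)
    (hVrank : (Matrix.fromRows V₁ V₂).rank = n)
    (hMU : M * Matrix.fromRows U₁ U₂ = Matrix.fromRows V₁ V₂ * A')
    (hMTU : Mᵀ * Matrix.fromRows U₁ U₂ = Matrix.fromRows V₁ V₂ * B')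
    (hrf : PencilReciprocalFree A' B') :
    IsUnit U₁ ↔ IsUnit V₂ := by
  have hUV : U₁ᵀ * V₁ + U₂ᵀ * V₂ = 0 := by
    simpa only [transpose_fromRows, fromCols_mul_fromRows] using
      hrf.eq_zero_of_mul_eq_transpose_mul (transpose_mul_mul_eq_of_mul_eq_mul hMU hMTU)
  have hVU : V₂ᵀ * U₂ + V₁ᵀ * U₁ = 0 := by
    simpa [add_comm] using congrArg transpose hUV
  have hU := hUrank.trans (Fintype.card_fin n).symm
  have hV := hVrank.trans (Fintype.card_fin n).symm
  constructor
  · intro hU₁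
    exact isUnit_of_mul_add_mul_eq_zero ((isUnit_transpose U₁).mpr hU₁) hUV
      fun _ => eq_zero_of_rank_fromRows_eq hV
  · intro hV₂
    exact isUnit_of_mul_add_mul_eq_zero ((isUnit_transpose V₂).mpr hV₂) hVU
      fun _ h₂ h₁ => eq_zero_of_rank_fromRows_eq hU h₁ h₂

/-- If the pencil `φ(z) = M + z Mᵀ` is regular,
`M [U₁; U₂] = [V₁; V₂] A'` and `Mᵀ [U₁; U₂] = [V₁; V₂] B'` with `[U₁; U₂]` and
`[V₁; V₂]` of rank n, and the pencil `α(z) = A' + z B'` is regular with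
reciprocal-free spectrum, then `U₁` is invertible iff `V₂` is invertible. -/
theorem U1_invertible_iff_V2_invertible
    (n : ℕ) (M : Matrix (Fin n ⊕ Fin n) (Fin n ⊕ Fin n) ℂ)
    (hφ : PencilRegular M Mᵀ)
    (U₁ U₂ V₁ V₂ A' B' : Matrix (Fin n) (Fin n) ℂ)
    (hUrank : (Matrix.fromRows U₁ U₂).rank = n)
    (hVrank : (Matrix.fromRows V₁ V₂).rank = n)
    (hMU : M * Matrix.fromRows U₁ U₂ = Matrix.fromRows V₁ V₂ * A')
    (hMTU : Mᵀ * Matrix.fromRows U₁ U₂ = Matrix.fromRows V₁ V₂ * B')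
    (hreg : PencilRegular A' B') (hrf : PencilReciprocalFree A' B') :
    IsUnit U₁ ↔ IsUnit V₂ :=
  U1_invertible_iff_V2_invertible_general n M U₁ U₂ V₁ V₂ A' B' hUrank hVrank hMU hMTU hrf
end

section
/- Let A, B, C, D ∈ ℝ^{n×n}, M = [[C, D],[A, −B]] ∈ ℝ^{2n×2n}, and suppose the pencil φ(z) = M + zMᵀ is regular. Let U₁, U₂, V₁, V₂, A', B' ∈ ℂ^{n×n} satisfy M·[U₁; U₂] = [V₁; V₂]·A' and Mᵀ·[U₁; U₂] = [V₁; V₂]·B', where [U₁; U₂] and [V₁; V₂] have rank n and the pencil α(z) = A' + zB' is regular with reciprocal-free spectrum. Suppose moreover that for every nonzero v ∈ ℂⁿ there exists z ∈ ℂ with vᵀ(B + zBᵀ)v ≠ 0. Then U₁ is invertible, and X = U₂U₁⁻¹ satisfies the ⊤-NARE, i.e., DX + XᵀA − XᵀBX + C = 0. -/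
open scoped Matrix

/-!
Put `U = [U₁; U₂]` and `V = [V₁; V₂]`. The relations `M U = V A'` and `Mᵀ U = V B'` give
`A'ᵀ S = Sᵀ B'` for `S = Vᵀ U`. At a generic `z`, with `P = A' + z B'` and `Q = B' + z A'`, this
becomes the Sylvester equation `(Qᵀ⁻¹ Pᵀ) S = S (P⁻¹ Q)`. A common eigenvalue of its two
coefficients would give eigenvalues `ζ` and `1 / ζ` of `α`, or make `A'` and `B'` both singular,
or force `z = ±1`; so `S = 0`. Then `Uᵀ M U = Sᵀ A' = 0` and likewise `Uᵀ Mᵀ U = 0`. If `U₁ v = 0`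
with `v ≠ 0`, then `w = U₂ v ≠ 0` because `U` has full column rank, and the two identities say that
`wᵀ B w = wᵀ Bᵀ w = 0`, which is excluded. Finally, for `X = U₂ U₁⁻¹`,
`Uᵀ M U = U₁ᵀ (D X + Xᵀ A - Xᵀ B X + C) U₁`.
-/

open Polynomial Filter

namespace Matrix

section Sylvester

variable {K : Type*} [Field K] {ι κ : Type*} [Fintype ι] [DecidableEq ι] [Fintype κ]
  [DecidableEq κ]

theorem pow_mul_eq_mul_pow {L : Matrix ι ι K} {R : Matrix κ κ K} {S : Matrix ι κ K}
    (hS : L * S = S * R) (k : ℕ) : L ^ k * S = S * R ^ k := by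
  induction k with
  | zero => simp
  | succ k ih =>
    rw [pow_succ, pow_succ, Matrix.mul_assoc, hS, ← Matrix.mul_assoc, ih, Matrix.mul_assoc]

theorem aeval_mul_eq_mul_aeval {L : Matrix ι ι K} {R : Matrix κ κ K} {S : Matrix ι κ K}
    (hS : L * S = S * R) (p : K[X]) : aeval L p * S = S * aeval R p := by
  simp only [aeval_eq_sum_range, Matrix.sum_mul, Matrix.mul_sum, Matrix.smul_mul, Matrix.mul_smul,
    pow_mul_eq_mul_pow hS]

theorem eq_zero_of_mul_eq_mul_of_isCoprime {L : Matrix ι ι K} {R : Matrix κ κ K}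
    {S : Matrix ι κ K} (hS : L * S = S * R) (h : IsCoprime R.charpoly L.charpoly) : S = 0 := by
  obtain ⟨a, b, hab⟩ := h
  have hinv : aeval L a * aeval L R.charpoly = 1 := by
    simpa [aeval_self_charpoly] using congrArg (aeval L) hab
  calc S = aeval L a * aeval L R.charpoly * S := by rw [hinv, Matrix.one_mul]
    _ = 0 := by rw [Matrix.mul_assoc, aeval_mul_eq_mul_aeval hS, aeval_self_charpoly,
      Matrix.mul_zero, Matrix.mul_zero]

theorem eq_zero_of_mul_eq_mul [IsAlgClosed K] {L : Matrix ι ι K} {R : Matrix κ κ K}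
    {S : Matrix ι κ K} (hS : L * S = S * R)
    (h : ∀ μ : K, (scalar κ μ - R).det = 0 → (scalar ι μ - L).det ≠ 0) : S = 0 := by
  refine eq_zero_of_mul_eq_mul_of_isCoprime hS
    ((isCoprime_iff_aeval_ne_zero_of_isAlgClosed K K _ _).2 fun μ => ?_)
  simp only [coe_aeval_eq_eval, eval_charpoly]
  tauto

end Sylvester

section Determinant

variable {K : Type*} [Field K] {ι : Type*} [Fintype ι] [DecidableEq ι]

theorem eval_det_map_C_add_X_smul (A B : Matrix ι ι K) (z : K) :
    (A.map C + (X : K[X]) • B.map C).det.eval z = (A + z • B).det := by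
  rw [← coe_evalRingHom, RingHom.map_det]
  congr 1
  ext i j
  simp only [RingHom.mapMatrix_apply, map_apply, add_apply, smul_apply, smul_eq_mul,
    coe_evalRingHom, eval_add, eval_mul, eval_X, eval_C]

theorem det_mul_det_scalar_sub_inv_mul {P : Matrix ι ι K} (hP : IsUnit P.det) (Q : Matrix ι ι K)
    (μ : K) : P.det * (scalar ι μ - P⁻¹ * Q).det = (μ • P - Q).det := by
  rw [← det_mul, Matrix.mul_sub, mul_nonsing_inv_cancel_left _ _ hP, scalar_apply,
    ← smul_eq_mul_diagonal]

theorem det_smul_add_smul_eq_zero_iff {A B : Matrix ι ι K} {a : K} (ha : a ≠ 0) (b : K) :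
    (a • A + b • B).det = 0 ↔ (A + (b / a) • B).det = 0 := by
  rw [show a • A + b • B = a • (A + (b / a) • B) by
    rw [smul_add, smul_smul, mul_div_cancel₀ _ ha], det_smul]
  simp [ha]

end Determinant

end Matrix

section Pencil

open Matrix

variable {ι : Type*} [Fintype ι] [DecidableEq ι] {A B : Matrix ι ι ℂ}

theorem PencilRegular.eventually_det_ne_zero (h : PencilRegular A B) :
    ∀ᶠ z : ℂ in cofinite, (A + z • B).det ≠ 0 := by
  have hp : (A.map C + (X : ℂ[X]) • B.map C).det ≠ 0 := by
    obtain ⟨z, hz⟩ := h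
    intro h0
    simp [← eval_det_map_C_add_X_smul, h0] at hz
  simpa [eventually_cofinite, ← eval_det_map_C_add_X_smul] using finite_setOfPred_isRoot hp

theorem PencilRegular.swap (h : PencilRegular A B) : PencilRegular B A := by
  obtain ⟨z, hz, hz0⟩ := (h.eventually_det_ne_zero.and (eventually_cofinite_ne 0)).exists
  refine ⟨z⁻¹, ?_⟩
  rw [show B + z⁻¹ • A = z⁻¹ • (A + z • B) by
    rw [smul_add, smul_smul, inv_mul_cancel₀ hz0, one_smul, add_comm], det_smul]
  exact mul_ne_zero (pow_ne_zero _ (inv_ne_zero hz0)) hz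

theorem PencilReciprocalFree.eq_zero_of_det_eq_zero (h : PencilReciprocalFree A B) {a b : ℂ}
    (hab : (a • A + b • B).det = 0) (hba : (b • A + a • B).det = 0) : a = 0 ∧ b = 0 := by
  by_contra hne
  rcases eq_or_ne a 0 with rfl | ha
  · have hb : b ≠ 0 := fun hb => hne ⟨rfl, hb⟩
    simp only [zero_smul, zero_add, add_zero, det_smul, mul_eq_zero, pow_eq_zero_iff',
      hb, false_and, false_or] at hab hba
    exact h.2 ⟨hba, hab⟩
  rcases eq_or_ne b 0 with rfl | hb
  · simp only [zero_smul, zero_add, add_zero, det_smul, mul_eq_zero, pow_eq_zero_iff',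
      ha, false_and, false_or] at hab hba
    exact h.2 ⟨hab, hba⟩
  refine h.1 ⟨b / a, a / b, by field_simp, ?_, ?_⟩
  · rwa [← det_smul_add_smul_eq_zero_iff ha]
  · rwa [← det_smul_add_smul_eq_zero_iff hb]

theorem PencilReciprocalFree.eq_zero_of_transpose_mul_eq (hreg : PencilRegular A B)
    (hrf : PencilReciprocalFree A B) {S : Matrix ι ι ℂ} (hS : Aᵀ * S = Sᵀ * B) : S = 0 := by
  obtain ⟨z, hP, hQ, hz₁, hz₂⟩ := (hreg.eventually_det_ne_zero.and
    (hreg.swap.eventually_det_ne_zero.and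
      ((eventually_cofinite_ne 1).and (eventually_cofinite_ne (-1))))).exists
  set P := A + z • B
  set Q := B + z • A
  have hS' : Bᵀ * S = Sᵀ * A := by
    simpa [Matrix.transpose_mul] using (congrArg transpose hS).symm
  have hPS : Pᵀ * S = Sᵀ * Q := by
    simp only [P, Q, transpose_add, transpose_smul, Matrix.add_mul, Matrix.mul_add,
      Matrix.smul_mul, Matrix.mul_smul, hS, hS']
  have hQS : Qᵀ * S = Sᵀ * P := by
    simp only [P, Q, transpose_add, transpose_smul, Matrix.add_mul, Matrix.mul_add,
      Matrix.smul_mul, Matrix.mul_smul, hS, hS']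
  have hPu : IsUnit P.det := isUnit_iff_ne_zero.2 hP
  have hQu : IsUnit Qᵀ.det := by rwa [det_transpose, isUnit_iff_ne_zero]
  have hSyl : (Qᵀ⁻¹ * Pᵀ) * S = S * (P⁻¹ * Q) := by
    have hSt : Sᵀ = Qᵀ * S * P⁻¹ := by rw [hQS, mul_nonsing_inv_cancel_right _ _ hPu]
    rw [Matrix.mul_assoc, hPS, hSt, ← Matrix.mul_assoc, ← Matrix.mul_assoc, ← Matrix.mul_assoc,
      nonsing_inv_mul _ hQu, Matrix.one_mul, Matrix.mul_assoc]
  refine eq_zero_of_mul_eq_mul hSyl fun μ hR hL => ?_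
  have h₁ : ((μ - z) • A + (μ * z - 1) • B).det = 0 := by
    rw [show (μ - z) • A + (μ * z - 1) • B = μ • P - Q by simp only [P, Q]; module,
      ← det_mul_det_scalar_sub_inv_mul hPu, hR, mul_zero]
  have h₂ : ((μ * z - 1) • A + (μ - z) • B).det = 0 := by
    rw [show (μ * z - 1) • A + (μ - z) • B = (μ • Qᵀ - Pᵀ)ᵀ by
        simp only [P, Q, transpose_sub, transpose_add, transpose_smul, transpose_transpose]
        module,
      det_transpose, ← det_mul_det_scalar_sub_inv_mul hQu, hL, mul_zero]
  obtain ⟨hμ, hμz⟩ := hrf.eq_zero_of_det_eq_zero h₁ h₂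
  have hzz : z * z = 1 := by linear_combination hμz - z * hμ
  rcases mul_self_eq_one_iff.1 hzz with h | h
  exacts [hz₁ h, hz₂ h]

end Pencil

namespace Matrix

section Deflating

variable {R : Type*} [CommRing R] {m k : Type*} [Fintype m] [Fintype k]

theorem transpose_mul_transpose_mul_eq_of_mul_eq {M : Matrix m m R} {U V : Matrix m k R}
    {A' B' : Matrix k k R} (hA : M * U = V * A') (hB : Mᵀ * U = V * B') :
    A'ᵀ * (Vᵀ * U) = (Vᵀ * U)ᵀ * B' := by
  calc A'ᵀ * (Vᵀ * U) = (M * U)ᵀ * U := by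
        rw [hA, transpose_mul, Matrix.mul_assoc]
    _ = Uᵀ * (Mᵀ * U) := by rw [transpose_mul, Matrix.mul_assoc]
    _ = (Vᵀ * U)ᵀ * B' := by rw [hB, transpose_mul, transpose_transpose, Matrix.mul_assoc]

theorem transpose_mul_mul_eq_zero_of_mul_eq {M : Matrix m m R} {U V : Matrix m k R}
    {A' : Matrix k k R} (hA : M * U = V * A') (hVU : Vᵀ * U = 0) : Uᵀ * M * U = 0 := by
  rw [Matrix.mul_assoc, hA, ← Matrix.mul_assoc, ← transpose_transpose (Uᵀ * V), transpose_mul,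
    transpose_transpose, hVU, transpose_zero, Matrix.zero_mul]

theorem mulVec_dotProduct_mulVec_mulVec (U : Matrix m k R) (N : Matrix m m R) (v : k → R) :
    U *ᵥ v ⬝ᵥ N *ᵥ (U *ᵥ v) = v ⬝ᵥ (Uᵀ * N * U) *ᵥ v := by
  rw [← mulVec_mulVec, ← mulVec_mulVec, dotProduct_mulVec v, vecMul_transpose, dotProduct_mulVec]

end Deflating

theorem mulVec_injective_of_rank_eq {K : Type*} [Field K] {m k : Type*} [Fintype k]
    {A : Matrix m k K} (h : A.rank = Fintype.card k) : Function.Injective A.mulVec :=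
  mulVec_injective_iff.2 <| linearIndependent_iff_card_eq_finrank_span.2 <|
    h.symm.trans A.rank_eq_finrank_span_cols

section Blocks

variable {R : Type*} [CommRing R] {n : Type*} [Fintype n]

theorem sumElim_zero_dotProduct_fromBlocks_mulVec (A B C D : Matrix n n R) (w : n → R) :
    Sum.elim 0 w ⬝ᵥ fromBlocks A B C D *ᵥ Sum.elim 0 w = w ⬝ᵥ D *ᵥ w := by
  simp [fromBlocks_mulVec, sumElim_dotProduct_sumElim]

theorem fromRows_one_transpose_mul_fromBlocks_mul [DecidableEq n] (X A B C D : Matrix n n R) :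
    (fromRows (1 : Matrix n n R) X)ᵀ * fromBlocks C D A (-B) * fromRows (1 : Matrix n n R) X =
      D * X + Xᵀ * A - Xᵀ * B * X + C := by
  rw [transpose_fromRows, fromCols_mul_fromBlocks, fromCols_mul_fromRows]
  simp only [transpose_one, Matrix.one_mul, Matrix.mul_one, Matrix.add_mul, Matrix.mul_neg,
    Matrix.neg_mul]
  abel

end Blocks

section Isotropic

variable {n : Type*} [Fintype n] [DecidableEq n]

theorem isUnit_of_transpose_mul_fromBlocks_mul_eq_zero {K : Type*} [Field K]
    {U₁ U₂ A B C D : Matrix n n K} (hU : Function.Injective (fromRows U₁ U₂).mulVec)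
    (hM : (fromRows U₁ U₂)ᵀ * fromBlocks C D A (-B) * fromRows U₁ U₂ = 0)
    (hMt : (fromRows U₁ U₂)ᵀ * (fromBlocks C D A (-B))ᵀ * fromRows U₁ U₂ = 0)
    (hB : ∀ v : n → K, v ≠ 0 → ∃ z : K, v ⬝ᵥ (B + z • Bᵀ) *ᵥ v ≠ 0) : IsUnit U₁ := by
  rw [isUnit_iff_isUnit_det, isUnit_iff_ne_zero]
  intro hdet
  obtain ⟨v, hv, hU₁v⟩ := exists_mulVec_eq_zero_iff.2 hdet
  set w := U₂ *ᵥ v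
  have hUv : fromRows U₁ U₂ *ᵥ v = Sum.elim (0 : n → K) w := by
    rw [fromRows_mulVec, hU₁v]
  have hw : w ≠ 0 := fun hw => hv <| hU <| by rw [hUv, hw, Sum.elim_zero_zero, mulVec_zero]
  have hiso : ∀ {C' D' A' B' : Matrix n n K},
      (fromRows U₁ U₂)ᵀ * fromBlocks C' D' A' B' * fromRows U₁ U₂ = 0 → w ⬝ᵥ B' *ᵥ w = 0 := by
    intro C' D' A' B' h
    rw [← sumElim_zero_dotProduct_fromBlocks_mulVec C' D' A', ← hUv,
      mulVec_dotProduct_mulVec_mulVec, h, zero_mulVec, dotProduct_zero]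
  have hBw : w ⬝ᵥ (-B) *ᵥ w = 0 := hiso hM
  have hBtw : w ⬝ᵥ (-B)ᵀ *ᵥ w = 0 := hiso (by rwa [fromBlocks_transpose] at hMt)
  obtain ⟨z, hz⟩ := hB w hw
  apply hz
  simp only [transpose_neg, neg_mulVec, dotProduct_neg, neg_eq_zero] at hBw hBtw
  rw [add_mulVec, smul_mulVec, dotProduct_add, dotProduct_smul, hBw, hBtw, smul_zero, add_zero]

theorem nare_of_transpose_mul_fromBlocks_mul_eq_zero {R : Type*} [CommRing R]
    {U₁ U₂ A B C D : Matrix n n R} (hU₁ : IsUnit U₁)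
    (hM : (fromRows U₁ U₂)ᵀ * fromBlocks C D A (-B) * fromRows U₁ U₂ = 0) :
    D * (U₂ * U₁⁻¹) + (U₂ * U₁⁻¹)ᵀ * A - (U₂ * U₁⁻¹)ᵀ * B * (U₂ * U₁⁻¹) + C = 0 := by
  have hdet : IsUnit U₁.det := (isUnit_iff_isUnit_det U₁).1 hU₁
  have hU : fromRows U₁ U₂ = fromRows 1 (U₂ * U₁⁻¹) * U₁ := by
    rw [fromRows_mul, Matrix.one_mul, nonsing_inv_mul_cancel_right _ _ hdet]
  have hres : U₁ᵀ * (D * (U₂ * U₁⁻¹) + (U₂ * U₁⁻¹)ᵀ * A - (U₂ * U₁⁻¹)ᵀ * B * (U₂ * U₁⁻¹) + C)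
      * U₁ = 0 := by
    rw [← fromRows_one_transpose_mul_fromBlocks_mul, ← hM, hU, transpose_mul]
    simp only [Matrix.mul_assoc]
  rwa [IsUnit.mul_left_eq_zero hU₁, IsUnit.mul_right_eq_zero ((isUnit_transpose U₁).2 hU₁)] at hres

end Isotropic

end Matrix

/-- sufficient condition for the invertibility of `U₁`.  With
`M = [[C, D], [A, -B]]` (viewed over ℂ), a deflating subspace spanned by `[U₁; U₂]`
associated with a reciprocal-free set of eigenvalues, and the condition that for every
nonzero `v` there is `z` with `vᵀ (B + z Bᵀ) v ≠ 0`, the matrix `U₁` is invertible and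
`X = U₂ U₁⁻¹` solves the ⊤-NARE `D X + Xᵀ A − Xᵀ B X + C = 0`. -/
theorem U1_invertible_and_tNARE_solvable
    (n : ℕ) (A B C D : Matrix (Fin n) (Fin n) ℝ) :
    ∀ Ac Bc Cc Dc : Matrix (Fin n) (Fin n) ℂ,
      Ac = A.map (Complex.ofReal ·) → Bc = B.map (Complex.ofReal ·) →
      Cc = C.map (Complex.ofReal ·) → Dc = D.map (Complex.ofReal ·) →
      ∀ M : Matrix (Fin n ⊕ Fin n) (Fin n ⊕ Fin n) ℂ,
        M = Matrix.fromBlocks Cc Dc Ac (-Bc) →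
        PencilRegular M Mᵀ →
        ∀ U₁ U₂ V₁ V₂ A' B' : Matrix (Fin n) (Fin n) ℂ,
          (Matrix.fromRows U₁ U₂).rank = n →
          (Matrix.fromRows V₁ V₂).rank = n →
          M * Matrix.fromRows U₁ U₂ = Matrix.fromRows V₁ V₂ * A' →
          Mᵀ * Matrix.fromRows U₁ U₂ = Matrix.fromRows V₁ V₂ * B' →
          PencilRegular A' B' → PencilReciprocalFree A' B' →
          (∀ v : Fin n → ℂ, v ≠ 0 → ∃ z : ℂ, v ⬝ᵥ (Bc + z • Bcᵀ) *ᵥ v ≠ 0) →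
          IsUnit U₁ ∧
            Dc * (U₂ * U₁⁻¹) + (U₂ * U₁⁻¹)ᵀ * Ac
              - (U₂ * U₁⁻¹)ᵀ * Bc * (U₂ * U₁⁻¹) + Cc = 0 := by
  intro Ac Bc Cc Dc _ _ _ _ M hM _ U₁ U₂ V₁ V₂ A' B' hrkU _ hMU hMtU hreg hrf hBc
  have hVU : (Matrix.fromRows V₁ V₂)ᵀ * Matrix.fromRows U₁ U₂ = 0 :=
    hrf.eq_zero_of_transpose_mul_eq hreg
      (Matrix.transpose_mul_transpose_mul_eq_of_mul_eq hMU hMtU)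
  have hM₀ := Matrix.transpose_mul_mul_eq_zero_of_mul_eq hMU hVU
  have hMt₀ := Matrix.transpose_mul_mul_eq_zero_of_mul_eq hMtU hVU
  subst hM
  have hU₁ : IsUnit U₁ := Matrix.isUnit_of_transpose_mul_fromBlocks_mul_eq_zero
    (Matrix.mulVec_injective_of_rank_eq (by rwa [Fintype.card_fin])) hM₀ hMt₀ hBc
  exact ⟨hU₁, Matrix.nare_of_transpose_mul_fromBlocks_mul_eq_zero hU₁ hM₀⟩
end

section
/- Let A, B, C, D ∈ ℝ^{n×n}, M = [[C, D],[A, −B]] ∈ ℝ^{2n×2n}, and suppose the pencil φ(z) = M + zMᵀ is regular. Let U₁, U₂, V₁, V₂, A', B' ∈ ℂ^{n×n} satisfy M·[U₁; U₂] = [V₁; V₂]·A' and Mᵀ·[U₁; U₂] = [V₁; V₂]·B', where [U₁; U₂] and [V₁; V₂] have rank n and the pencil α(z) = A' + zB' is regular with reciprocal-free spectrum. If U₁ is invertible, then for every z ∈ ℂ with det(A' + zB') ≠ 0 the n×2n matrix [A + zDᵀ, −B − zBᵀ] (horizontal concatenation) has rank n. -/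
open scoped Matrix

/-!
Complete `[U₁; U₂]` and `[V₁; V₂]` to invertible matrices `W` and `Y`. In these bases `M` and `Mᵀ`
become block upper triangular with diagonal blocks `A', H` and `B', H'`. As
`det (M + z Mᵀ) = det (Mᵀ + z M)`, this gives
`det (A' + z B') det (H + z H') = det (B' + z A') det (H' + z H)`. Reciprocal-freeness makes
`det (A' + z B')` and `det (B' + z A')` coprime, so `det (H' + z H) = q(z) det (A' + z B')` with
`q(z) = q(1/z)`, i.e. `q` is a nonzero constant. Hence `H' + z H` is invertible off the spectrum,
and then every kernel vector of `Mᵀ + z M` lies in the span of `[U₁; U₂]`. A left null vector `y`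
of `[A + z Dᵀ, -B - z Bᵀ]` gives the kernel vector `(0, y)`, which vanishes as `U₁` is invertible.
-/

open Polynomial

namespace Polynomial

variable {K : Type*} [Field K]

theorem eval_reverse (q : K[X]) {w : K} (hw : w ≠ 0) :
    q.reverse.eval w = w ^ q.natDegree * q.eval w⁻¹ := by
  let := invertibleOfNonzero (inv_ne_zero hw)
  have h := eval₂_reverse_mul_pow (RingHom.id K) w⁻¹ q
  rw [invOf_eq_inv, inv_inv, eval₂_id, eval₂_id] at h
  rw [← h, inv_pow, mul_left_comm, mul_inv_cancel₀ (pow_ne_zero _ hw), mul_one]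

theorem natDegree_eq_zero_of_eventually_eval_inv [Infinite K] {q : K[X]}
    (h : ∀ᶠ w in Filter.cofinite, q.eval w⁻¹ = q.eval w) : q.natDegree = 0 := by
  by_contra hk
  have hrev : q.reverse = X ^ q.natDegree * q := by
    refine eq_of_infinite_eval_eq _ _ (Filter.frequently_cofinite_iff_infinite.mp ?_)
    refine ((h.and (Filter.eventually_cofinite_ne 0)).mono fun w ⟨hq, hw⟩ => ?_).frequently
    rw [eval_reverse q hw, hq, eval_mul, eval_pow, eval_X]
  have h0 := congrArg (coeff · 0) hrev
  simp only [coeff_zero_reverse, coeff_X_pow_mul', Nat.le_zero, hk, if_false,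
    leadingCoeff_eq_zero] at h0
  simp [h0] at hk

end Polynomial

namespace Matrix

theorem fromBlocks_add_smul_transpose {R m : Type*} [Ring R] (A B C D : Matrix m m R) (z : R) :
    fromBlocks C D A (-B) + z • (fromBlocks C D A (-B))ᵀ
      = fromBlocks (C + z • Cᵀ) (D + z • Aᵀ) (A + z • Dᵀ) (-B - z • Bᵀ) := by
  rw [fromBlocks_transpose, fromBlocks_smul, fromBlocks_add, transpose_neg, smul_neg,
    sub_eq_add_neg]

variable {m n : Type*} [Fintype m] [Fintype n]

theorem sumElim_zero_vecMul_fromBlocks {R : Type*} [Semiring R] (A : Matrix m m R)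
    (B : Matrix m n R) (C : Matrix n m R) (D : Matrix n n R) (y : n → R) :
    Sum.elim 0 y ᵥ* fromBlocks A B C D = y ᵥ* fromCols C D := by
  simp [vecMul_fromBlocks, vecMul_fromCols]

theorem add_smul_mul_eq_mul_fromBlocks {R : Type*} [CommRing R]
    {P Q W Y : Matrix (m ⊕ n) (m ⊕ n) R} {A B : Matrix m m R} {G G' : Matrix m n R}
    {H H' : Matrix n n R} (h₁ : P * W = Y * fromBlocks A G 0 H)
    (h₂ : Q * W = Y * fromBlocks B G' 0 H') (z : R) :
    (P + z • Q) * W = Y * fromBlocks (A + z • B) (G + z • G') 0 (H + z • H') := by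
  rw [add_mul, smul_mul, h₁, h₂, ← Matrix.mul_smul, ← Matrix.mul_add, fromBlocks_smul,
    fromBlocks_add, smul_zero, add_zero]

theorem rank_eq_card_of_vecMul_eq_zero {K : Type*} [Field K] {N : Matrix m n K}
    (h : ∀ y, y ᵥ* N = 0 → y = 0) : N.rank = Fintype.card m :=
  (vecMul_injective_iff.mp <| (injective_iff_map_eq_zero N.vecMulLinear).mpr h).rank_matrix

variable [DecidableEq m] [DecidableEq n]

section CommRing

variable {R : Type*} [CommRing R]

theorem exists_mul_fromCols_eq_mul_fromBlocks {M : Matrix (m ⊕ n) (m ⊕ n) R}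
    {U V : Matrix (m ⊕ n) m R} {V' : Matrix (m ⊕ n) n R} {A : Matrix m m R}
    (hV : IsUnit (fromCols V V')) (h : M * U = V * A) (U' : Matrix (m ⊕ n) n R) :
    ∃ G H, M * fromCols U U' = fromCols V V' * fromBlocks A G 0 H := by
  set Y := fromCols V V'
  refine ⟨toRows₁ (Y⁻¹ * (M * U')), toRows₂ (Y⁻¹ * (M * U')), ?_⟩
  rw [← fromCols_fromRows_eq_fromBlocks, mul_fromCols, mul_fromCols, fromRows_toRows,
    mul_nonsing_inv_cancel_left _ _ ((isUnit_iff_isUnit_det Y).mp hV), fromCols_mul_fromRows,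
    Matrix.mul_zero, add_zero, h]

noncomputable def pencilDet (P Q : Matrix m m R) : R[X] :=
  (P.map C + (X : R[X]) • Q.map C).det

theorem eval_pencilDet (P Q : Matrix m m R) (z : R) :
    (pencilDet P Q).eval z = (P + z • Q).det := by
  rw [pencilDet, ← coe_evalRingHom, RingHom.map_det]
  congr 1
  ext i j
  simpa using mul_comm _ _

theorem pencilDet_mul_right (P Q W : Matrix m m R) :
    pencilDet (P * W) (Q * W) = pencilDet P Q * C W.det := by
  rw [pencilDet, pencilDet, Matrix.map_mul, Matrix.map_mul, ← smul_mul, ← add_mul, det_mul,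
    RingHom.map_det, RingHom.mapMatrix_apply]

theorem pencilDet_mul_left (Y P Q : Matrix m m R) :
    pencilDet (Y * P) (Y * Q) = C Y.det * pencilDet P Q := by
  rw [pencilDet, pencilDet, Matrix.map_mul, Matrix.map_mul, ← Matrix.mul_smul, ← Matrix.mul_add,
    det_mul, RingHom.map_det, RingHom.mapMatrix_apply]

theorem pencilDet_transpose (P Q : Matrix m m R) : pencilDet Pᵀ Qᵀ = pencilDet P Q := by
  rw [pencilDet, pencilDet, ← det_transpose, transpose_add, transpose_smul, transpose_map,
    transpose_map, transpose_transpose, transpose_transpose]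

theorem pencilDet_fromBlocks_zero₂₁ (A B : Matrix m m R) (G G' : Matrix m n R)
    (H H' : Matrix n n R) :
    pencilDet (fromBlocks A G 0 H) (fromBlocks B G' 0 H') = pencilDet A B * pencilDet H H' := by
  rw [pencilDet, fromBlocks_map, fromBlocks_map, Matrix.map_zero _ (map_zero C), fromBlocks_smul,
    fromBlocks_add, smul_zero, add_zero, det_fromBlocks_zero₂₁, pencilDet, pencilDet]

end CommRing

variable {K : Type*} [Field K]

theorem exists_isUnit_fromCols {U : Matrix (m ⊕ n) m K} (hU : U.rank = Fintype.card m) :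
    ∃ U' : Matrix (m ⊕ n) n K, IsUnit (fromCols U U') := by
  obtain ⟨S, hS⟩ := (LinearMap.range U.mulVecLin).exists_isCompl
  have hdim : Module.finrank K S = Fintype.card n := by
    have := Submodule.finrank_add_eq_of_isCompl hS
    simp_all [rank]
  let b : Module.Basis n K S :=
    (Module.finBasisOfFinrankEq K S hdim).reindex (Fintype.equivFin n).symm
  refine ⟨of fun i j => (b j : m ⊕ n → K) i, mulVec_surjective_iff_isUnit.mp fun v => ?_⟩
  obtain ⟨_, ⟨x, rfl⟩, s, hs, rfl⟩ :=
    Submodule.mem_sup.mp (hS.sup_eq_top ▸ Submodule.mem_top (x := v))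
  refine ⟨Sum.elim x (b.repr ⟨s, hs⟩), ?_⟩
  rw [fromCols_mulVec_sumElim, mulVecLin_apply]
  congr 1
  ext i
  have hs_repr := congrFun (congrArg Subtype.val (b.sum_repr ⟨s, hs⟩)) i
  simp only [Submodule.coe_sum, Submodule.coe_smul, Finset.sum_apply, Pi.smul_apply,
    smul_eq_mul] at hs_repr
  simp [mulVec, dotProduct, ← hs_repr, mul_comm]

theorem exists_eq_mulVec_of_mulVec_eq_zero {N Y : Matrix (m ⊕ n) (m ⊕ n) K}
    {U : Matrix (m ⊕ n) m K} {U' : Matrix (m ⊕ n) n K} {S₁₁ : Matrix m m K} {S₁₂ : Matrix m n K}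
    {S₂₂ : Matrix n n K} (hW : IsUnit (fromCols U U')) (hY : IsUnit Y) (hS : IsUnit S₂₂)
    (h : N * fromCols U U' = Y * fromBlocks S₁₁ S₁₂ 0 S₂₂) {w : m ⊕ n → K} (hw : N *ᵥ w = 0) :
    ∃ x, w = U *ᵥ x := by
  obtain ⟨u, rfl⟩ := mulVec_surjective_iff_isUnit.mpr hW w
  have hSu : fromBlocks S₁₁ S₁₂ 0 S₂₂ *ᵥ u = 0 := mulVec_injective_iff_isUnit.mpr hY <| by
    rw [mulVec_mulVec, ← h, ← mulVec_mulVec, hw, mulVec_zero]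
  have hu : u ∘ Sum.inr = 0 := mulVec_injective_iff_isUnit.mpr hS <| by
    simpa [fromBlocks_mulVec] using congrArg (· ∘ Sum.inr) hSu
  refine ⟨u ∘ Sum.inl, ?_⟩
  conv_lhs => rw [← Sum.elim_comp_inl_inr u, hu, fromCols_mulVec_sumElim, mulVec_zero, add_zero]

theorem eval_pencilDet_swap {P Q : Matrix m m K} {w : K} (hw : w ≠ 0) :
    (pencilDet Q P).eval w = w ^ Fintype.card m * (pencilDet P Q).eval w⁻¹ := by
  rw [eval_pencilDet, eval_pencilDet, ← det_smul, smul_add, smul_smul, mul_inv_cancel₀ hw,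
    one_smul, add_comm]

variable [Infinite K]

theorem exists_pencilDet_swap_eq_C_mul {A B H H' : Matrix m m K}
    (hcop : IsCoprime (pencilDet A B) (pencilDet B A))
    (hne : pencilDet A B * pencilDet H H' ≠ 0)
    (h : pencilDet A B * pencilDet H H' = pencilDet B A * pencilDet H' H) :
    ∃ c ≠ 0, pencilDet H' H = C c * pencilDet A B := by
  obtain ⟨q, hq⟩ : pencilDet B A ∣ pencilDet H H' := hcop.symm.dvd_of_dvd_mul_left ⟨_, h⟩
  have hBA : pencilDet B A ≠ 0 := left_ne_zero_of_mul (h ▸ hne)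
  have hswap : pencilDet H' H = pencilDet A B * q :=
    mul_left_cancel₀ hBA (by rw [← h, hq]; ring)
  have hAB : ∀ᶠ w in Filter.cofinite, (pencilDet A B).eval w ≠ 0 :=
    Filter.eventually_cofinite.mpr <| by
      simpa using finite_setOfPred_isRoot (left_ne_zero_of_mul hne)
  have hsymm : ∀ᶠ w in Filter.cofinite, q.eval w⁻¹ = q.eval w := by
    filter_upwards [Filter.eventually_cofinite_ne 0, hAB] with w hw hw'
    refine (mul_left_cancel₀ hw' ?_).symm
    calc (pencilDet A B).eval w * q.eval w = (pencilDet H' H).eval w := by rw [hswap, eval_mul]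
      _ = w ^ Fintype.card m * ((pencilDet B A).eval w⁻¹ * q.eval w⁻¹) := by
        rw [eval_pencilDet_swap hw, hq, eval_mul]
      _ = (pencilDet A B).eval w * q.eval w⁻¹ := by rw [eval_pencilDet_swap hw]; ring
  have hq_C := eq_C_of_natDegree_eq_zero (natDegree_eq_zero_of_eventually_eval_inv hsymm)
  refine ⟨q.coeff 0, fun h0 => right_ne_zero_of_mul hne ?_, by rw [hswap, mul_comm, ← hq_C]⟩
  rw [hq, hq_C, h0, C_0, mul_zero]

theorem exists_pencilDet_swap_eq_C_mul_of_palindromic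
    {P W Y : Matrix (m ⊕ m) (m ⊕ m) K} {A B G G' H H' : Matrix m m K}
    (hW : IsUnit W) (hY : IsUnit Y) (h₁ : P * W = Y * fromBlocks A G 0 H)
    (h₂ : Pᵀ * W = Y * fromBlocks B G' 0 H') (hP : pencilDet P Pᵀ ≠ 0)
    (hcop : IsCoprime (pencilDet A B) (pencilDet B A)) :
    ∃ c ≠ 0, pencilDet H' H = C c * pencilDet A B := by
  have hfactor {Q Q' S S'} (h : Q * W = Y * S) (h' : Q' * W = Y * S') :
      pencilDet Q Q' * C W.det = C Y.det * pencilDet S S' := by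
    rw [← pencilDet_mul_right, h, h', pencilDet_mul_left]
  have e₁ := hfactor h₁ h₂
  have e₂ := hfactor h₂ h₁
  rw [pencilDet_fromBlocks_zero₂₁] at e₁ e₂
  rw [← pencilDet_transpose, transpose_transpose] at e₂
  have hYdet : C Y.det ≠ 0 := C_ne_zero.mpr ((isUnit_iff_isUnit_det Y).mp hY).ne_zero
  have hWdet : C W.det ≠ 0 := C_ne_zero.mpr ((isUnit_iff_isUnit_det W).mp hW).ne_zero
  refine exists_pencilDet_swap_eq_C_mul hcop ?_ (mul_left_cancel₀ hYdet (e₁.symm.trans e₂))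
  exact right_ne_zero_of_mul (e₁ ▸ mul_ne_zero hP hWdet)

end Matrix

theorem PencilRegular.pencilDet_ne_zero {m : Type*} [Fintype m] [DecidableEq m]
    {P Q : Matrix m m ℂ} (h : PencilRegular P Q) : Matrix.pencilDet P Q ≠ 0 := by
  obtain ⟨z, hz⟩ := h
  exact fun h0 => hz (by rw [← Matrix.eval_pencilDet, h0, eval_zero])

theorem PencilReciprocalFree.isCoprime_pencilDet {m : Type*} [Fintype m] [DecidableEq m]
    {A B : Matrix m m ℂ} (h : PencilReciprocalFree A B) :
    IsCoprime (Matrix.pencilDet A B) (Matrix.pencilDet B A) := by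
  refine (isCoprime_iff_aeval_ne_zero_of_isAlgClosed ℂ ℂ _ _).mpr fun w => ?_
  simp only [aeval_def, Algebra.algebraMap_self, eval₂_id, Matrix.eval_pencilDet, ← not_and_or]
  rintro ⟨h₁, h₂⟩
  rcases eq_or_ne w 0 with rfl | hw
  · exact h.2 ⟨by simpa using h₁, by simpa using h₂⟩
  · rw [← Matrix.eval_pencilDet, Matrix.eval_pencilDet_swap hw, Matrix.eval_pencilDet] at h₂
    exact h.1 ⟨w, w⁻¹, mul_inv_cancel₀ hw, h₁,
      (mul_eq_zero.mp h₂).resolve_left (pow_ne_zero _ hw)⟩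

/-- necessary condition for the invertibility of `U₁`.  With
`M = [[C, D], [A, -B]]` (viewed over ℂ) and a deflating subspace spanned by `[U₁; U₂]`
associated with a reciprocal-free set of eigenvalues (the spectrum of `A' + z B'`),
if `U₁` is invertible then for every `z` outside that spectrum the matrix
`[A + z Dᵀ, −B − z Bᵀ]` has rank n. -/
theorem necessary_condition_U1_invertible
    (n : ℕ) (A B C D : Matrix (Fin n) (Fin n) ℝ) :
    ∀ Ac Bc Cc Dc : Matrix (Fin n) (Fin n) ℂ,
      Ac = A.map (Complex.ofReal ·) → Bc = B.map (Complex.ofReal ·) →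
      Cc = C.map (Complex.ofReal ·) → Dc = D.map (Complex.ofReal ·) →
      ∀ M : Matrix (Fin n ⊕ Fin n) (Fin n ⊕ Fin n) ℂ,
        M = Matrix.fromBlocks Cc Dc Ac (-Bc) →
        PencilRegular M Mᵀ →
        ∀ U₁ U₂ V₁ V₂ A' B' : Matrix (Fin n) (Fin n) ℂ,
          (Matrix.fromRows U₁ U₂).rank = n →
          (Matrix.fromRows V₁ V₂).rank = n →
          M * Matrix.fromRows U₁ U₂ = Matrix.fromRows V₁ V₂ * A' →
          Mᵀ * Matrix.fromRows U₁ U₂ = Matrix.fromRows V₁ V₂ * B' →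
          PencilRegular A' B' → PencilReciprocalFree A' B' →
          IsUnit U₁ →
          ∀ z : ℂ, (A' + z • B').det ≠ 0 →
            (Matrix.fromCols (Ac + z • Dcᵀ) (-Bc - z • Bcᵀ)).rank = n := by
  open Matrix in
  intro Ac Bc Cc Dc _ _ _ _ M hM hregM U₁ U₂ V₁ V₂ A' B' hrkU hrkV hMU hMtU _ hrf hU₁ z hz
  obtain ⟨U', hW⟩ := exists_isUnit_fromCols (hrkU.trans (Fintype.card_fin n).symm)
  obtain ⟨V', hY⟩ := exists_isUnit_fromCols (hrkV.trans (Fintype.card_fin n).symm)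
  obtain ⟨G, H, h₁⟩ := exists_mul_fromCols_eq_mul_fromBlocks hY hMU U'
  obtain ⟨G', H', h₂⟩ := exists_mul_fromCols_eq_mul_fromBlocks hY hMtU U'
  obtain ⟨c, hc, hH⟩ := exists_pencilDet_swap_eq_C_mul_of_palindromic hW hY h₁ h₂
    hregM.pencilDet_ne_zero hrf.isCoprime_pencilDet
  have hHz : IsUnit (H' + z • H) := by
    rw [isUnit_iff_isUnit_det, isUnit_iff_ne_zero, ← eval_pencilDet, hH, eval_mul, eval_C,
      eval_pencilDet]
    exact mul_ne_zero hc hz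
  refine (rank_eq_card_of_vecMul_eq_zero fun y hy => ?_).trans (Fintype.card_fin n)
  have hker : (Mᵀ + z • M) *ᵥ Sum.elim 0 y = 0 := by
    have hT : Mᵀ + z • M = (M + z • Mᵀ)ᵀ := by
      rw [transpose_add, transpose_smul, transpose_transpose]
    rw [hT, mulVec_transpose, hM, fromBlocks_add_smul_transpose, sumElim_zero_vecMul_fromBlocks, hy]
  obtain ⟨x, hx⟩ := exists_eq_mulVec_of_mulVec_eq_zero hW hY hHz
    (add_smul_mul_eq_mul_fromBlocks h₂ h₁ z) hker
  obtain ⟨hx₁, rfl⟩ := Sum.elim_eq_iff.mp (hx.trans (fromRows_mulVec U₁ U₂ x))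
  rw [mulVec_injective_iff_isUnit.mpr hU₁ (hx₁.symm.trans (mulVec_zero U₁).symm), mulVec_zero]
end

section
/- Let R = [[0, R₁₂],[R₂₁, R₂₂]] ∈ ℂ^{2m×2m} (2×2 block form with m×m blocks), where R₁₂ and R₂₁ are antitriangular m×m matrices and the pencil R₂₁ + zR₁₂ᵀ is regular with reciprocal-free spectrum. Then: (i) the ⊤-Sylvester equation R₂₁Y + YᵀR₁₂ = −R₂₂ has a unique solution Y ∈ ℂ^{m×m}; (ii) there exist a unitary matrix Q ∈ ℂ^{2m×2m}, antitriangular matrices N₁₂, N₂₁ ∈ ℂ^{m×m}, a matrix N₂₂ ∈ ℂ^{m×m}, and nonzero constants c₁, c₂ ∈ ℂ such that QᵀRQ = [[0, N₁₂],[N₂₁, N₂₂]], det(N₂₁ + zN₁₂ᵀ) = c₁·det(R₁₂ + zR₂₁ᵀ) for all z ∈ ℂ, and det(N₁₂ + zN₂₁ᵀ) = c₂·det(R₂₁ + zR₁₂ᵀ) for all z ∈ ℂ (so the spectra of the two antidiagonal block pencils are swapped). -/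
open scoped Matrix

/-- A k×k matrix is antitriangular if `N i j = 0` whenever `i + j ≤ k` (1-based),
i.e. `(i+1) + (j+1) ≤ k` for 0-based indices. -/
def Antitriangular {k : ℕ} (N : Matrix (Fin k) (Fin k) ℂ) : Prop :=
  ∀ i j : Fin k, (i : ℕ) + 1 + ((j : ℕ) + 1) ≤ k → N i j = 0

/-!
Along the antidiagonal everything is explicit. Write `aᵢ = R₂₁ (rev i) i` and
`bᵢ = R₁₂ i (rev i)`: the pencil `R₂₁ + z R₁₂ᵀ` is antitriangular with eigenvalues `-aᵢ / bᵢ`,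
so reciprocal-freeness forces `a_p a_q ≠ b_p b_q` for all `p, q`. In the
⊤-Sylvester equation, read at `(rev p, rev q)` and `(rev q, rev p)`, the two unknowns
`Y p (rev q)` and `Y q (rev p)` meet only entries with larger `p + q`, in a 2×2 system of
determinant `a_p a_q - b_p b_q`; sweeping the antidiagonals from the corner shows that the
operator is injective, hence bijective.

For the solution `Y`, congruence by `S = [[Y, I], [I, 0]]` turns `R` into
`[[0, R₂₁], [R₁₂, 0]]`. The QR factorisation `S U = Q` (with `U` upper triangular, from the
LDL decomposition of `Sᴴ S`) makes the transformation unitary, and congruence by the block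
upper triangular `U` keeps the off-diagonal blocks antitriangular while multiplying both pencil
determinants by `det U₁ * det U₃`.
-/

open Matrix

section UnitaryTriangularization

open scoped ComplexOrder

variable {𝕜 : Type*} [RCLike 𝕜]

theorem RCLike.exists_star_mul_mul_self_eq_one {x : 𝕜} (hx : 0 < x) :
    ∃ c : 𝕜, star c * x * c = 1 := by
  obtain ⟨r, hr, rfl⟩ := RCLike.pos_iff_exists_ofReal.mp hx
  refine ⟨((√r)⁻¹ : ℝ), ?_⟩
  rw [RCLike.star_def, RCLike.conj_ofReal]
  norm_cast
  field_simp
  exact (Real.sq_sqrt hr.le).symm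

theorem Matrix.exists_upperTriangular_mul_unitary {n : Type*} [Fintype n] [LinearOrder n]
    [WellFoundedLT n] [LocallyFiniteOrderBot n] {M : Matrix n n 𝕜} (hM : IsUnit M.det) :
    ∃ U : Matrix n n 𝕜, U.IsUpperTriangular ∧ (M * U)ᴴ * (M * U) = 1 := by
  have hS : (Mᴴ * M).PosDef := .conjTranspose_mul_self M
    (mulVec_injective_iff_isUnit.mpr ((isUnit_iff_isUnit_det M).mpr hM))
  set W := LDL.lowerInv hS
  have hD : diagonal (LDL.diagEntries hS) = W * (Mᴴ * M) * Wᴴ := LDL.diag_eq_lowerInv_conj hS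
  have hDpos : (diagonal (LDL.diagEntries hS)).PosDef := by
    rw [hD]
    exact hS.mul_mul_conjTranspose_same (vecMul_injective_iff_isUnit.mpr (isUnit_of_invertible W))
  choose c hc using fun i =>
    RCLike.exists_star_mul_mul_self_eq_one (by simpa using hDpos.diag_pos (i := i))
  refine ⟨Wᴴ * diagonal c, ?_, ?_⟩
  · refine BlockTriangular.mul (fun i j hij => ?_) (blockTriangular_diagonal c)
    simp [conjTranspose_apply, W, LDL.lowerInv_triangular hS (show j < i from hij)]
  · calc (M * (Wᴴ * diagonal c))ᴴ * (M * (Wᴴ * diagonal c))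
        = (diagonal c)ᴴ * (W * (Mᴴ * M) * Wᴴ) * diagonal c := by
          simp only [conjTranspose_mul, conjTranspose_conjTranspose, Matrix.mul_assoc]
      _ = 1 := by
          rw [← hD, diagonal_conjTranspose, diagonal_mul_diagonal, diagonal_mul_diagonal,
            ← diagonal_one]
          exact congrArg diagonal (funext hc)

theorem Matrix.exists_fromBlocks_upperTriangular_mul_unitary {m k : ℕ}
    {M : Matrix (Fin m ⊕ Fin k) (Fin m ⊕ Fin k) 𝕜} (hM : IsUnit M.det) :
    ∃ (U₁ : Matrix (Fin m) (Fin m) 𝕜) (U₂ : Matrix (Fin m) (Fin k) 𝕜)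
      (U₃ : Matrix (Fin k) (Fin k) 𝕜), U₁.IsUpperTriangular ∧ U₃.IsUpperTriangular ∧
      (M * fromBlocks U₁ U₂ 0 U₃)ᴴ * (M * fromBlocks U₁ U₂ 0 U₃) = 1 := by
  let e : Fin m ⊕ Fin k ≃ Fin (m + k) := finSumFinEquiv
  obtain ⟨U, hU, hMU⟩ := exists_upperTriangular_mul_unitary (M := M.submatrix e.symm e.symm)
    (by rwa [det_submatrix_equiv_self])
  have hU' : (U.submatrix e e).BlockTriangular e := hU.submatrix
  refine ⟨(U.submatrix e e).toBlocks₁₁, (U.submatrix e e).toBlocks₁₂,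
    (U.submatrix e e).toBlocks₂₂, fun i j hij => hU' (Fin.strictMono_castAdd k hij),
    fun i j hij => hU' ((Fin.natAdd_lt_natAdd_iff m).mpr hij), ?_⟩
  have hzero : (U.submatrix e e).toBlocks₂₁ = 0 := by
    ext i j
    exact hU' (by simp only [e, finSumFinEquiv_apply_left, finSumFinEquiv_apply_right, Fin.lt_def,
      Fin.val_castAdd, Fin.val_natAdd]; omega)
  have hMU' : M * U.submatrix e e = (M.submatrix e.symm e.symm * U).submatrix e e := by
    rw [← submatrix_mul_equiv _ _ _ e]
    simp
  rw [← hzero, fromBlocks_toBlocks, hMU', conjTranspose_submatrix, submatrix_mul_equiv, hMU,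
    submatrix_one_equiv]

end UnitaryTriangularization

namespace Matrix

variable {l k R : Type*} [Fintype l] [Fintype k] [CommRing R]

def transposeSylvester (A B : Matrix l l R) : Matrix l l R →ₗ[R] Matrix l l R :=
  LinearMap.mulLeft R A + LinearMap.mulRight R B ∘ₗ (transposeLinearEquiv l l R R).toLinearMap

@[simp]
theorem transposeSylvester_apply (A B Y : Matrix l l R) :
    transposeSylvester A B Y = A * Y + Yᵀ * B :=
  rfl

theorem fromBlocks_transpose_mul_mul_fromBlocks [DecidableEq l] (Y B C D : Matrix l l R) :
    (fromBlocks Y 1 1 0)ᵀ * fromBlocks 0 B C D * fromBlocks Y 1 1 0 =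
      fromBlocks (C * Y + Yᵀ * B + D) C B 0 := by
  simp only [fromBlocks_transpose, transpose_one, transpose_zero, fromBlocks_multiply, mul_zero,
    one_mul, zero_add, zero_mul, add_zero, mul_one, fromBlocks_inj, and_self, and_true]
  abel

theorem fromBlocks_transpose_mul_antidiag_mul (U₁ : Matrix l l R) (U₂ : Matrix l k R)
    (U₃ : Matrix k k R) (A : Matrix l k R) (B : Matrix k l R) :
    (fromBlocks U₁ U₂ 0 U₃)ᵀ * fromBlocks 0 A B 0 * fromBlocks U₁ U₂ 0 U₃ =
      fromBlocks 0 (U₁ᵀ * A * U₃) (U₃ᵀ * B * U₁) (U₃ᵀ * B * U₂ + U₂ᵀ * A * U₃) := by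
  simp [fromBlocks_transpose, fromBlocks_multiply, Matrix.mul_assoc]

theorem det_transpose_mul_mul_add_smul_transpose [DecidableEq l] (U V A B : Matrix l l R)
    (z : R) :
    (Vᵀ * B * U + z • (Uᵀ * A * V)ᵀ).det = V.det * U.det * (B + z • Aᵀ).det := by
  have h : Vᵀ * B * U + z • (Uᵀ * A * V)ᵀ = Vᵀ * (B + z • Aᵀ) * U := by
    simp [transpose_mul, Matrix.mul_add, Matrix.add_mul, Matrix.mul_assoc]
  rw [h, det_mul, det_mul, det_transpose]
  ring

end Matrix

namespace Antitriangular

variable {m : ℕ} {A B : Matrix (Fin m) (Fin m) ℂ}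

theorem transpose (hA : Antitriangular A) : Antitriangular Aᵀ :=
  fun i j h => hA j i (by omega)

theorem add_smul (hA : Antitriangular A) (hB : Antitriangular B) (z : ℂ) :
    Antitriangular (A + z • B) :=
  fun i j h => by simp [hA i j h, hB i j h]

theorem transpose_mul_mul (hA : Antitriangular A) {U V : Matrix (Fin m) (Fin m) ℂ}
    (hU : U.IsUpperTriangular) (hV : V.IsUpperTriangular) :
    Antitriangular (Uᵀ * A * V) := by
  intro i j hij
  rw [mul_apply]
  refine Finset.sum_eq_zero fun l _ => ?_
  rcases lt_or_ge j l with hjl | hlj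
  · rw [hV hjl, mul_zero]
  rw [mul_apply]
  refine mul_eq_zero_of_left (Finset.sum_eq_zero fun k _ => ?_) _
  rcases lt_or_ge i k with hik | hki
  · rw [transpose_apply, hU hik, zero_mul]
  · rw [hA k l (by simp only [Fin.le_def] at hki hlj; omega), mul_zero]

theorem det_eq_zero_iff (hA : Antitriangular A) : A.det = 0 ↔ ∃ i, A (Fin.rev i) i = 0 := by
  have hrev : (A.submatrix Fin.revPerm id).IsUpperTriangular := by
    intro i j hij
    have : (j : ℕ) < i := hij
    exact hA _ _ (by simp only [Fin.revPerm_apply, id, Fin.val_rev]; omega)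
  have hdet := det_permute Fin.revPerm A
  rw [det_of_isUpperTriangular hrev] at hdet
  rw [← mul_eq_zero_iff_left (Int.cast_ne_zero.mpr (Units.ne_zero _)), ← hdet,
    Finset.prod_eq_zero_iff]
  simp

theorem transposeSylvester_apply_rev (hA : Antitriangular A) (hB : Antitriangular B)
    {Y : Matrix (Fin m) (Fin m) ℂ} {p q : Fin m}
    (hY : ∀ p' q' : Fin m, (p : ℕ) + q < p' + q' → Y p' (Fin.rev q') = 0) :
    transposeSylvester A B Y (Fin.rev p) (Fin.rev q) =
      A (Fin.rev p) p * Y p (Fin.rev q) + Y q (Fin.rev p) * B q (Fin.rev q) := by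
  have hAY : ∑ k, A (Fin.rev p) k * Y k (Fin.rev q) = A (Fin.rev p) p * Y p (Fin.rev q) := by
    refine Finset.sum_eq_single_of_mem p (Finset.mem_univ _) fun k _ hk => ?_
    rcases lt_or_gt_of_ne hk with hk | hk
    · rw [hA _ _ (by rw [Fin.val_rev]; omega), zero_mul]
    · rw [hY _ _ (by omega), mul_zero]
  have hYB : ∑ k, Y k (Fin.rev p) * B k (Fin.rev q) = Y q (Fin.rev p) * B q (Fin.rev q) := by
    refine Finset.sum_eq_single_of_mem q (Finset.mem_univ _) fun k _ hk => ?_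
    rcases lt_or_gt_of_ne hk with hk | hk
    · rw [hB _ _ (by rw [Fin.val_rev]; omega), mul_zero]
    · rw [hY _ _ (by omega), zero_mul]
  simp only [transposeSylvester_apply, Matrix.add_apply, mul_apply, transpose_apply, hAY, hYB]

theorem transposeSylvester_injective (hA : Antitriangular A) (hB : Antitriangular B)
    (hAB : ∀ p q : Fin m,
      A (Fin.rev p) p * A (Fin.rev q) q ≠ B p (Fin.rev p) * B q (Fin.rev q)) :
    Function.Injective (transposeSylvester A B) := by
  rw [← LinearMap.ker_eq_bot, LinearMap.ker_eq_bot']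
  intro Y hY
  suffices h : ∀ d : ℕ, ∀ p q : Fin m, (p : ℕ) + q + d = 2 * m → Y p (Fin.rev q) = 0 by
    ext i j
    simpa using h (2 * m - (i + Fin.rev j)) i (Fin.rev j) (by omega)
  intro d
  induction d using Nat.strong_induction_on with
  | _ d ih =>
    intro p q hd
    have hvanish (p' q' : Fin m) (h : (p : ℕ) + q < p' + q') : Y p' (Fin.rev q') = 0 :=
      ih (2 * m - (p' + q')) (by omega) p' q' (by omega)
    have hpq := hA.transposeSylvester_apply_rev hB hvanish
    have hqp := hA.transposeSylvester_apply_rev hB (p := q) (q := p)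
      fun p' q' h => hvanish p' q' (by omega)
    rw [hY, Matrix.zero_apply] at hpq hqp
    have hmul : (A (Fin.rev p) p * A (Fin.rev q) q - B p (Fin.rev p) * B q (Fin.rev q)) *
        Y p (Fin.rev q) = 0 := by
      linear_combination -(A (Fin.rev q) q * hpq) + B q (Fin.rev q) * hqp
    exact (mul_eq_zero.mp hmul).resolve_left (sub_ne_zero.mpr (hAB p q))

end Antitriangular

theorem PencilReciprocalFree.antidiag_mul_ne {m : ℕ} {A B : Matrix (Fin m) (Fin m) ℂ}
    (hA : Antitriangular A) (hB : Antitriangular B) (h : PencilReciprocalFree A Bᵀ)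
    (p q : Fin m) :
    A (Fin.rev p) p * A (Fin.rev q) q ≠ B p (Fin.rev p) * B q (Fin.rev q) := by
  intro heq
  have hpencil (z : ℂ) :
      (A + z • Bᵀ).det = 0 ↔ ∃ i, A (Fin.rev i) i + z * B i (Fin.rev i) = 0 := by
    simpa using (hA.add_smul hB.transpose z).det_eq_zero_iff
  by_cases hB0 : B p (Fin.rev p) = 0 ∨ B q (Fin.rev q) = 0
  · have hA0 : A (Fin.rev p) p = 0 ∨ A (Fin.rev q) q = 0 := by
      rw [← mul_eq_zero, heq]
      rcases hB0 with hB0 | hB0 <;> simp [hB0]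
    refine h.2 ⟨hA.det_eq_zero_iff.mpr ?_, hB.transpose.det_eq_zero_iff.mpr ?_⟩
    · rcases hA0 with hA0 | hA0
      exacts [⟨p, hA0⟩, ⟨q, hA0⟩]
    · rcases hB0 with hB0 | hB0
      exacts [⟨p, hB0⟩, ⟨q, hB0⟩]
  · obtain ⟨hBp, hBq⟩ := not_or.mp hB0
    refine h.1 ⟨-(A (Fin.rev p) p / B p (Fin.rev p)), -(A (Fin.rev q) q / B q (Fin.rev q)), ?_,
      (hpencil _).mpr ⟨p, ?_⟩, (hpencil _).mpr ⟨q, ?_⟩⟩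
    · field_simp
      linear_combination heq
    · field_simp
      ring
    · field_simp
      ring

theorem swap_central_blocks_general
    (m : ℕ) (R₁₂ R₂₁ R₂₂ : Matrix (Fin m) (Fin m) ℂ)
    (h₁₂ : Antitriangular R₁₂) (h₂₁ : Antitriangular R₂₁)
    (hrf : PencilReciprocalFree R₂₁ R₁₂ᵀ) :
    (∃! Y : Matrix (Fin m) (Fin m) ℂ, R₂₁ * Y + Yᵀ * R₁₂ = -R₂₂) ∧
    ∃ (Q : Matrix (Fin m ⊕ Fin m) (Fin m ⊕ Fin m) ℂ)
      (N₁₂ N₂₁ N₂₂ : Matrix (Fin m) (Fin m) ℂ) (c₁ c₂ : ℂ),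
        Qᴴ * Q = 1 ∧
        Antitriangular N₁₂ ∧ Antitriangular N₂₁ ∧ c₁ ≠ 0 ∧ c₂ ≠ 0 ∧
        Qᵀ * Matrix.fromBlocks 0 R₁₂ R₂₁ R₂₂ * Q = Matrix.fromBlocks 0 N₁₂ N₂₁ N₂₂ ∧
        (∀ z : ℂ, (N₂₁ + z • N₁₂ᵀ).det = c₁ * (R₁₂ + z • R₂₁ᵀ).det) ∧
        (∀ z : ℂ, (N₁₂ + z • N₂₁ᵀ).det = c₂ * (R₂₁ + z • R₁₂ᵀ).det) := by
  have hinj := h₂₁.transposeSylvester_injective h₁₂ (hrf.antidiag_mul_ne h₂₁ h₁₂)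
  have hbij : Function.Bijective (transposeSylvester R₂₁ R₁₂) :=
    ⟨hinj, LinearMap.injective_iff_surjective.mp hinj⟩
  obtain ⟨Y, hY⟩ := hbij.surjective (-R₂₂)
  refine ⟨hbij.existsUnique (-R₂₂), ?_⟩
  set S : Matrix (Fin m ⊕ Fin m) (Fin m ⊕ Fin m) ℂ := fromBlocks Y 1 1 0
  have hS : IsUnit S.det :=
    isUnit_det_of_left_inverse (B := fromBlocks 0 1 1 (-Y)) (by simp [S, fromBlocks_multiply])
  obtain ⟨U₁, U₂, U₃, hU₁, hU₃, hQ⟩ := exists_fromBlocks_upperTriangular_mul_unitary hS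
  set U := fromBlocks U₁ U₂ 0 U₃
  have hU : U₁.det * U₃.det ≠ 0 := by
    have := isUnit_det_of_left_inverse hQ
    rw [det_mul, det_fromBlocks_zero₂₁] at this
    exact (isUnit_of_mul_isUnit_right this).ne_zero
  have hSRS : Sᵀ * fromBlocks 0 R₁₂ R₂₁ R₂₂ * S = fromBlocks 0 R₂₁ R₁₂ 0 := by
    rw [fromBlocks_transpose_mul_mul_fromBlocks, ← transposeSylvester_apply, hY, neg_add_cancel]
  refine ⟨S * U, U₁ᵀ * R₂₁ * U₃, U₃ᵀ * R₁₂ * U₁, U₃ᵀ * R₁₂ * U₂ + U₂ᵀ * R₂₁ * U₃,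
    U₃.det * U₁.det, U₁.det * U₃.det, hQ, h₂₁.transpose_mul_mul hU₁ hU₃,
    h₁₂.transpose_mul_mul hU₃ hU₁, by rwa [mul_comm], hU, ?_,
    det_transpose_mul_mul_add_smul_transpose _ _ _ _,
    det_transpose_mul_mul_add_smul_transpose _ _ _ _⟩
  calc (S * U)ᵀ * fromBlocks 0 R₁₂ R₂₁ R₂₂ * (S * U)
      = Uᵀ * (Sᵀ * fromBlocks 0 R₁₂ R₂₁ R₂₂ * S) * U := by
        simp only [transpose_mul, Matrix.mul_assoc]
    _ = _ := by rw [hSRS, fromBlocks_transpose_mul_antidiag_mul]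

/-- swapping the two central blocks of an antitriangular ⊤-palindromic
pencil.  If `R₁₂`, `R₂₁` are antitriangular and the pencil `R₂₁ + z R₁₂ᵀ` is regular
with reciprocal-free spectrum, then (i) the ⊤-Sylvester equation
`R₂₁ Y + Yᵀ R₁₂ = −R₂₂` has a unique solution, and (ii) there is a unitary congruence
`Qᵀ R Q` of `R = [[0, R₁₂], [R₂₁, R₂₂]]` that is again antitriangular-blocked with the
spectra of the two antidiagonal block pencils swapped. -/
theorem swap_central_blocks
    (m : ℕ) (R₁₂ R₂₁ R₂₂ : Matrix (Fin m) (Fin m) ℂ)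
    (h₁₂ : Antitriangular R₁₂) (h₂₁ : Antitriangular R₂₁)
    (hreg : PencilRegular R₂₁ R₁₂ᵀ) (hrf : PencilReciprocalFree R₂₁ R₁₂ᵀ) :
    (∃! Y : Matrix (Fin m) (Fin m) ℂ, R₂₁ * Y + Yᵀ * R₁₂ = -R₂₂) ∧
    ∃ (Q : Matrix (Fin m ⊕ Fin m) (Fin m ⊕ Fin m) ℂ)
      (N₁₂ N₂₁ N₂₂ : Matrix (Fin m) (Fin m) ℂ) (c₁ c₂ : ℂ),
        Qᴴ * Q = 1 ∧
        Antitriangular N₁₂ ∧ Antitriangular N₂₁ ∧ c₁ ≠ 0 ∧ c₂ ≠ 0 ∧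
        Qᵀ * Matrix.fromBlocks 0 R₁₂ R₂₁ R₂₂ * Q = Matrix.fromBlocks 0 N₁₂ N₂₁ N₂₂ ∧
        (∀ z : ℂ, (N₂₁ + z • N₁₂ᵀ).det = c₁ * (R₁₂ + z • R₂₁ᵀ).det) ∧
        (∀ z : ℂ, (N₁₂ + z • N₂₁ᵀ).det = c₂ * (R₂₁ + z • R₁₂ᵀ).det) :=
  swap_central_blocks_general m R₁₂ R₂₁ R₂₂ h₁₂ h₂₁ hrf
end
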